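/- arXiv:2302.02686 — 3 statements merged into one kernel-verified Lean document; each statement's English description precedes it below -/
import Mathlib

section
/- Let G(E) be a well-formed TFG for (N1,m1) ▷_E (N2,m2), with both nets safe, and C its node concurrency relation. If v and w are nodes with v ∉ succ(w), w ∉ succ(v), and v C w, then v' C w' for every pair (v',w') ∈ succ(v) × succ(w). -/
open Finset

/-- A Petri net over a type of places `P`. -/
structure PetriNet (P : Type) where
  Trans : Type
  pre : Trans → P → ℕ
  post : Trans → P → ℕ

/-- Firing relation between markings. -/
def PetriNet.fire {P : Type} (N : PetriNet P) (m m' : P → ℕ) : Prop :=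
  ∃ t : N.Trans, (∀ p, N.pre t p ≤ m p) ∧ ∀ p, m' p = m p - N.pre t p + N.post t p

/-- Reachability of a marking from an initial one. -/
def PetriNet.reach {P : Type} (N : PetriNet P) (m0 m : P → ℕ) : Prop :=
  Relation.ReflTransGen N.fire m0 m

/-- A marked net is safe (1-bounded) when every reachable marking has at most one token per place. -/
def PetriNet.Safe {P : Type} (N : PetriNet P) (m0 : P → ℕ) : Prop :=
  ∀ m, N.reach m0 m → ∀ p, m p ≤ 1

/-- Two places are concurrent when some reachable marking marks both positively. -/
def PetriNet.ConcPlaces {P : Type} (N : PetriNet P) (m0 : P → ℕ) (p q : P) : Prop :=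
  ∃ m, N.reach m0 m ∧ 0 < m p ∧ 0 < m q

/-- A Token Flow Graph: redundancy arcs `R`, agglomeration arcs `A` (disjoint from `R`,
enforced in well-formedness), and constant nodes given by `kval`. -/
structure TFG (V : Type) [DecidableEq V] where
  R : Finset (V × V)
  A : Finset (V × V)
  kval : V → Option ℕ

variable {V : Type} [DecidableEq V]

def TFG.Edge (G : TFG V) (v w : V) : Prop := (v, w) ∈ G.R ∨ (v, w) ∈ G.A

/-- `G.Reach v w` means `v →* w`. -/
def TFG.Reach (G : TFG V) : V → V → Prop := Relation.ReflTransGen G.Edge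

/-- Successor set `succ(v)` (includes `v` itself). -/
def TFG.succs (G : TFG V) (v : V) : Set V := {w | G.Reach v w}

/-- A root has no incoming arc. -/
def TFG.IsRoot (G : TFG V) (v : V) : Prop := ∀ w, ¬ G.Edge w v

/-- A ∘-leaf has no outgoing agglomeration arc. -/
def TFG.IsCircLeaf (G : TFG V) (v : V) : Prop := ∀ w, (v, w) ∉ G.A

/-- The set `X` such that `v ∘→ X` (agglomeration children of `v`). -/
def TFG.aggChildren (G : TFG V) (v : V) : Finset V :=
  (G.A.filter (fun e => e.1 = v)).image Prod.snd

/-- The set `X` such that `X →• v` (redundancy parents of `v`). -/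
def TFG.redParents (G : TFG V) (v : V) : Finset V :=
  (G.R.filter (fun e => e.2 = v)).image Prod.fst

/-- A configuration is a partial valuation of the nodes; it must agree with constant nodes. -/
def TFG.IsConfig (G : TFG V) (c : V → Option ℕ) : Prop :=
  ∀ v n, G.kval v = some n → c v = some n

/-- A configuration is total when it is defined on every node. -/
def TotalConf (c : V → Option ℕ) : Prop := ∀ v, c v ≠ none

/-- Value of a configuration at a node (0 if undefined). -/
def cval (c : V → Option ℕ) (v : V) : ℕ := (c v).getD 0

/-- Well-definedness of a configuration: conditions (CBot) and (CEq). -/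
def TFG.WellDef (G : TFG V) (c : V → Option ℕ) : Prop :=
  (∀ v w, G.Edge v w → (c v = none ↔ c w = none)) ∧
  (∀ v n, c v = some n →
    ((G.aggChildren v).Nonempty → n = ∑ w ∈ G.aggChildren v, cval c w) ∧
    ((G.redParents v).Nonempty → n = ∑ w ∈ G.redParents v, cval c w))

/-- A system of reduction equations: `(v, X)` stands for the equation `v = ∑_{w ∈ X} w`. -/
abbrev EqSys (V : Type) := Finset (V × Finset V)

/-- A (non-negative integer) solution of the system `E`. -/
def Solves (E : EqSys V) (s : V → ℕ) : Prop :=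
  ∀ e ∈ E, s e.1 = ∑ w ∈ e.2, s w

/-- `E, ⟦c⟧` is consistent: some solution of `E` extends the partial valuation `c`. -/
def ConsistentWith (E : EqSys V) (c : V → Option ℕ) : Prop :=
  ∃ s : V → ℕ, Solves E s ∧ ∀ v n, c v = some n → s v = n

/-- Variables occurring in `E`. -/
def fvars (E : EqSys V) : Set V := {v | ∃ e ∈ E, v = e.1 ∨ v ∈ e.2}

/-- View a marking over the set of places `P` as a partial configuration over `V`. -/
def mconf (P : Set V) [DecidablePred (· ∈ P)] (m : ↥P → ℕ) : V → Option ℕ :=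
  fun v => if h : v ∈ P then some (m ⟨v, h⟩) else none

/-- Restriction of a configuration to a set of places, seen as a marking. -/
def restrict (c : V → Option ℕ) (P : Set V) : ↥P → ℕ := fun p => cval c ↑p

/-- Compatibility `c ≡ m` of a configuration with a marking on `P`. -/
def CompatM (c : V → Option ℕ) (P : Set V) (m : ↥P → ℕ) : Prop :=
  ∀ p : ↥P, c ↑p = some (m p)

/-- A solution of `E` agrees with a marking on `P`. -/
def AgreesOn (s : V → ℕ) (P : Set V) (m : ↥P → ℕ) : Prop := ∀ p : ↥P, s ↑p = m p

/-- `E`-equivalence `(N1,m1) ▷_E (N2,m2)`: conditions (A1), (A2), (A3). -/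
structure EEquiv (E : EqSys V) (P1 P2 : Set V)
    (N1 : PetriNet ↥P1) (m1 : ↥P1 → ℕ) (N2 : PetriNet ↥P2) (m2 : ↥P2 → ℕ) : Prop where
  A1l : ∀ m, N1.reach m1 m → ∃ s, Solves E s ∧ AgreesOn s P1 m
  A1r : ∀ m, N2.reach m2 m → ∃ s, Solves E s ∧ AgreesOn s P2 m
  A2 : ∃ s, Solves E s ∧ AgreesOn s P1 m1 ∧ AgreesOn s P2 m2
  A3 : ∀ m1' m2', (∃ s, Solves E s ∧ AgreesOn s P1 m1' ∧ AgreesOn s P2 m2') →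
      (N1.reach m1 m1' ↔ N2.reach m2 m2')

/-- Well-formedness of a TFG for an equivalence statement: conditions (T1)–(T6). -/
structure WellFormed (G : TFG V) (E : EqSys V) (P1 P2 : Set V) : Prop where
  T1 : {v | G.kval v = none} = P1 ∪ P2 ∪ fvars E
  T2 : ∀ v, G.kval v ≠ none → G.IsRoot v
  T3a : ∀ p p' q, (p, q) ∈ G.A → G.Edge p' q → p' = p
  T3b : ∀ p q, ¬((p, q) ∈ G.R ∧ (p, q) ∈ G.A)
  T4 : ∀ v X, ((X = G.aggChildren v ∨ X = G.redParents v) ∧ X.Nonempty) ↔ (v, X) ∈ E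
  T5 : ∀ v, ¬ Relation.TransGen G.Edge v v
  T6root : ∀ v, G.kval v = none → (G.IsRoot v ↔ v ∈ P2)
  T6leaf : ∀ v, G.kval v = none → (G.IsCircLeaf v ↔ v ∈ P1)

/-- Node concurrency relation of the TFG: both nodes are positive in some
total, well-defined configuration whose restriction to `N2` is reachable. -/
def NodeConc (G : TFG V) (P2 : Set V) [DecidablePred (· ∈ P2)]
    (N2 : PetriNet ↥P2) (m2 : ↥P2 → ℕ) (v w : V) : Prop :=
  ∃ c, G.IsConfig c ∧ TotalConf c ∧ G.WellDef c ∧ N2.reach m2 (restrict c P2) ∧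
    0 < cval c v ∧ 0 < cval c w

/-!
The values `s` of a total well-defined configuration solve the equations of the TFG, and a token
of `s` can be pushed along any path without touching the roots. Across a redundancy arc `a →• c`
the equation at `c` already gives `s c ≥ s a`. Across an agglomeration arc `a ∘→ c` with
`s c = 0`, some sibling `x` of `c` has `s x > 0`; replacing a unit flow out of `x` lying below `s`
by a unit flow out of `c` changes `s` by a solution of the homogeneous equations that vanishes
on the roots. Since the roots carry the constants and the places of `N2`, the result is again a
total well-defined configuration with the same reachable marking.

To make `v'` and `w'` positive at once, write `s = h + (s - h)` with `h ≤ s` a unit flow out of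
`v`, push `h` from `v` to `v'` and `s - h` from `w` to `w'`, and add the results. This works
because `v` is not a successor of `w`: `s - h` still solves the equations below `w`, and `h`
vanishes at `w`.
-/

open Relation

section EqSumAt

variable {α : Type*}

def EqSumAt {M : Type*} [AddCommMonoid M] (f : α → M) (z : α) (X : Finset α) : Prop :=
  X.Nonempty → f z = ∑ x ∈ X, f x

lemma EqSumAt.add {M : Type*} [AddCommMonoid M] {f g : α → M} {z : α} {X : Finset α}
    (hf : EqSumAt f z X) (hg : EqSumAt g z X) : EqSumAt (f + g) z X := fun hX => by
  simp only [Pi.add_apply, sum_add_distrib, hf hX, hg hX]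

lemma EqSumAt.sub {f g : α → ℤ} {z : α} {X : Finset α}
    (hf : EqSumAt f z X) (hg : EqSumAt g z X) : EqSumAt (f - g) z X := fun hX => by
  simp only [Pi.sub_apply, sum_sub_distrib, hf hX, hg hX]

lemma EqSumAt.tsub {f g : α → ℕ} {z : α} {X : Finset α} (hgf : g ≤ f)
    (hf : EqSumAt f z X) (hg : EqSumAt g z X) : EqSumAt (f - g) z X := fun hX => by
  simp only [Pi.sub_apply, sum_tsub_distrib X fun x _ => hgf x, hf hX, hg hX]

lemma EqSumAt.natCast {f : α → ℕ} {z : α} {X : Finset α} (hf : EqSumAt f z X) :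
    EqSumAt (fun x => (f x : ℤ)) z X := fun hX => by
  simp only [hf hX, Nat.cast_sum]

lemma EqSumAt.of_sub {f f' : α → ℕ} {z : α} {X : Finset α}
    (hd : EqSumAt (fun x => (f' x : ℤ) - f x) z X) (hf : EqSumAt f z X) : EqSumAt f' z X := by
  intro hX
  have hd := hd hX
  have hf : (f z : ℤ) = ∑ x ∈ X, (f x : ℤ) := by exact_mod_cast hf hX
  rw [sum_sub_distrib] at hd
  exact_mod_cast (by linarith : (f' z : ℤ) = ∑ x ∈ X, (f' x : ℤ))

end EqSumAt

section Split

variable {α : Type*} [DecidableEq α]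

lemma exists_split {X : Finset α} (hX : X.Nonempty) (cap : α → ℕ) (k : ℕ) :
    ∃ g : α → ℕ, ∑ x ∈ X, g x = k ∧ (k ≤ ∑ x ∈ X, cap x → ∀ x ∈ X, g x ≤ cap x) := by
  induction hX using Finset.Nonempty.cons_induction generalizing k with
  | singleton a => exact ⟨fun _ => k, by simp, by simp⟩
  | cons a X ha hX ih =>
    obtain ⟨g, hgsum, hgcap⟩ := ih (k - min k (cap a))
    refine ⟨Function.update g a (min k (cap a)), ?_, fun hk => ?_⟩
    · rw [sum_cons, Function.update_self, sum_congr rfl fun x hx => Function.update_of_ne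
        (ne_of_mem_of_not_mem hx ha) _ _, hgsum]
      omega
    · rw [sum_cons] at hk
      have := hgcap (by omega)
      intro x hx
      rcases mem_cons.1 hx with rfl | hx
      · simp
      · rw [Function.update_of_ne (ne_of_mem_of_not_mem hx ha)]
        exact this x hx

noncomputable def split (X : Finset α) (cap : α → ℕ) (k : ℕ) : α → ℕ :=
  if hX : X.Nonempty then (exists_split hX cap k).choose else 0

lemma sum_split {X : Finset α} (hX : X.Nonempty) (cap : α → ℕ) (k : ℕ) :
    ∑ x ∈ X, split X cap k x = k := by
  rw [split, dif_pos hX]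
  exact (exists_split hX cap k).choose_spec.1

lemma split_le {X : Finset α} {cap : α → ℕ} {k : ℕ} (hk : k ≤ ∑ x ∈ X, cap x)
    {x : α} (hx : x ∈ X) : split X cap k x ≤ cap x := by
  rw [split, dif_pos ⟨x, hx⟩]
  exact (exists_split ⟨x, hx⟩ cap k).choose_spec.2 hk x hx

end Split

namespace TFG

variable {G : TFG V}

@[simp] lemma mem_aggChildren {v w : V} : w ∈ G.aggChildren v ↔ (v, w) ∈ G.A := by
  simp [aggChildren]

@[simp] lemma mem_redParents {v p : V} : p ∈ G.redParents v ↔ (p, v) ∈ G.R := by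
  simp [redParents]

lemma edge_of_mem_aggChildren {v w : V} (h : w ∈ G.aggChildren v) : G.Edge v w :=
  Or.inr (mem_aggChildren.1 h)

lemma edge_of_mem_redParents {v p : V} (h : p ∈ G.redParents v) : G.Edge p v :=
  Or.inl (mem_redParents.1 h)

lemma not_isRoot_of_reach {x z : V} (hx : ¬ G.IsRoot x) (hxz : G.Reach x z) : ¬ G.IsRoot z := by
  rcases hxz.cases_tail with rfl | ⟨y, -, hyz⟩
  · exact hx
  · exact fun hz => hz y hyz

/-- Conditions (T3) and (T5) of well-formedness. -/
structure WellShaped (G : TFG V) : Prop where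
  eq_of_mem_A : ∀ p p' q, (p, q) ∈ G.A → G.Edge p' q → p' = p
  not_mem_R_and_A : ∀ p q, ¬((p, q) ∈ G.R ∧ (p, q) ∈ G.A)
  acyclic : ∀ v, ¬ TransGen G.Edge v v

namespace WellShaped

lemma wellFounded (hG : G.WellShaped) : WellFounded G.Edge := by
  have : IsStrictOrder V (TransGen G.Edge) :=
    { irrefl := hG.acyclic, trans := fun _ _ _ => TransGen.trans }
  let S : Finset V := (G.R ∪ G.A).image Prod.fst ∪ (G.R ∪ G.A).image Prod.snd
  refine Subrelation.wf (fun {a b} hab => ⟨TransGen.single hab, ?_, ?_⟩)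
    (Set.wellFoundedOn_iff.1 S.finite_toSet.wellFoundedOn)
  · exact mem_coe.2 (mem_union_left _ (mem_image_of_mem Prod.fst (mem_union.2 hab)))
  · exact mem_coe.2 (mem_union_right _ (mem_image_of_mem Prod.snd (mem_union.2 hab)))

lemma not_reach_of_edge (hG : G.WellShaped) {a b : V} (hab : G.Edge a b) : ¬ G.Reach b a :=
  fun hba => hG.acyclic a (TransGen.head' hab hba)

lemma reach_antisymm (hG : G.WellShaped) {a b : V} (hab : G.Reach a b) (hba : G.Reach b a) :
    a = b := by
  rcases hab.cases_head with h | ⟨c, hac, hcb⟩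
  · exact h
  · exact absurd (hcb.trans hba) (hG.not_reach_of_edge hac)

lemma eq_of_mem_aggChildren (hG : G.WellShaped) {a p x : V} (hx : x ∈ G.aggChildren a)
    (hpx : G.Edge p x) : p = a :=
  hG.eq_of_mem_A a p x (mem_aggChildren.1 hx) hpx

lemma redParents_eq_empty (hG : G.WellShaped) {a x : V} (hx : x ∈ G.aggChildren a) :
    G.redParents x = ∅ := by
  refine eq_empty_of_forall_notMem fun p hp => ?_
  obtain rfl := hG.eq_of_mem_aggChildren hx (edge_of_mem_redParents hp)
  exact hG.not_mem_R_and_A p x ⟨mem_redParents.1 hp, mem_aggChildren.1 hx⟩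

lemma not_reach_of_mem_aggChildren (hG : G.WellShaped) {a x u : V} (hx : x ∈ G.aggChildren a)
    (hu : u ∈ G.aggChildren a) (hxu : x ≠ u) : ¬ G.Reach x u := by
  intro hxu'
  rcases hxu'.cases_tail with rfl | ⟨q, hxq, hqu⟩
  · exact hxu rfl
  · obtain rfl := hG.eq_of_mem_aggChildren hu hqu
    exact hG.not_reach_of_edge (edge_of_mem_aggChildren hx) hxq

end WellShaped

section Balance

variable {M : Type*} [AddCommMonoid M]

def Balanced (G : TFG V) (f : V → M) : Prop :=
  ∀ z, EqSumAt f z (G.aggChildren z) ∧ EqSumAt f z (G.redParents z)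

def BalancedBelow (G : TFG V) (f : V → M) (y : V) : Prop :=
  ∀ z, G.Reach y z → EqSumAt f z (G.aggChildren z) ∧ (z ≠ y → EqSumAt f z (G.redParents z))

lemma Balanced.add {f g : V → M} (hf : G.Balanced f) (hg : G.Balanced g) : G.Balanced (f + g) :=
  fun z => ⟨(hf z).1.add (hg z).1, (hf z).2.add (hg z).2⟩

lemma Balanced.balancedBelow {f : V → M} (hf : G.Balanced f) (y : V) : G.BalancedBelow f y :=
  fun z _ => ⟨(hf z).1, fun _ => (hf z).2⟩

lemma BalancedBelow.mono (hG : G.WellShaped) {f : V → M} {a c : V} (hf : G.BalancedBelow f a)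
    (hac : G.Reach a c) : G.BalancedBelow f c := by
  intro z hcz
  refine ⟨(hf z (hac.trans hcz)).1, fun hzc => (hf z (hac.trans hcz)).2 ?_⟩
  rintro rfl
  exact hzc (hG.reach_antisymm hcz hac).symm

lemma BalancedBelow.tsub {f g : V → ℕ} {y : V} (hf : G.BalancedBelow f y) (hgf : g ≤ f)
    (hg : G.BalancedBelow g y) : G.BalancedBelow (f - g) y := fun z hz =>
  ⟨(hf z hz).1.tsub hgf (hg z hz).1, fun hzy => ((hf z hz).2 hzy).tsub hgf ((hg z hz).2 hzy)⟩

end Balance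

def Rerouting (G : TFG V) (F F' : V → ℕ) : Prop :=
  G.Balanced (fun z => (F' z : ℤ) - F z) ∧ ∀ z, G.IsRoot z → F' z = F z

namespace Rerouting

variable {F F' F'' H H' : V → ℕ}

lemma refl (F : V → ℕ) : G.Rerouting F F :=
  ⟨fun z => by simp [EqSumAt], fun _ _ => rfl⟩

lemma trans (h₁ : G.Rerouting F F') (h₂ : G.Rerouting F' F'') : G.Rerouting F F'' := by
  refine ⟨?_, fun z hz => (h₂.2 z hz).trans (h₁.2 z hz)⟩
  convert h₂.1.add h₁.1 using 1
  funext z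
  simp only [Pi.add_apply]
  ring

lemma add (hF : G.Rerouting F F') (hH : G.Rerouting H H') : G.Rerouting (F + H) (F' + H') := by
  refine ⟨?_, fun z hz => by simp [hF.2 z hz, hH.2 z hz]⟩
  convert hF.1.add hH.1 using 1
  funext z
  simp only [Pi.add_apply]
  push_cast
  ring

lemma balanced (h : G.Rerouting F F') (hF : G.Balanced F) : G.Balanced F' :=
  fun z => ⟨(h.1 z).1.of_sub (hF z).1, (h.1 z).2.of_sub (hF z).2⟩

lemma balancedBelow (h : G.Rerouting F F') {y : V} (hF : G.BalancedBelow F y) :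
    G.BalancedBelow F' y := fun z hz =>
  ⟨(h.1 z).1.of_sub (hF z hz).1, fun hzy => (h.1 z).2.of_sub ((hF z hz).2 hzy)⟩

end Rerouting

structure IsUnitFlow (G : TFG V) (y : V) (f : V → ℕ) : Prop where
  apex : f y = 1
  eq_zero_of_not_reach : ∀ z, ¬ G.Reach y z → f z = 0
  eqSumAt_aggChildren : ∀ z, y ∉ G.aggChildren z → EqSumAt f z (G.aggChildren z)
  eqSumAt_redParents : ∀ z, z ≠ y → EqSumAt f z (G.redParents z)

namespace IsUnitFlow

variable {y : V} {f : V → ℕ}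

lemma eq_zero_of_isRoot (hf : G.IsUnitFlow y f) (hy : ¬ G.IsRoot y) {z : V} (hz : G.IsRoot z) :
    f z = 0 :=
  hf.eq_zero_of_not_reach z fun hyz => not_isRoot_of_reach hy hyz hz

lemma balancedBelow (hG : G.WellShaped) (hf : G.IsUnitFlow y f) {b : V}
    (hb : G.Reach b y → y = b) : G.BalancedBelow f b := by
  intro z hbz
  refine ⟨hf.eqSumAt_aggChildren z fun hy => ?_, fun hzb => hf.eqSumAt_redParents z ?_⟩
  · obtain rfl := hb (hbz.tail (edge_of_mem_aggChildren hy))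
    exact hG.not_reach_of_edge (edge_of_mem_aggChildren hy) hbz
  · rintro rfl
    exact hzb (hb hbz)

lemma balanced_sub (hG : G.WellShaped) {a x u : V} (hx : x ∈ G.aggChildren a)
    (hu : u ∈ G.aggChildren a) {f g : V → ℕ} (hf : G.IsUnitFlow x f) (hg : G.IsUnitFlow u g) :
    G.Balanced fun z => (g z : ℤ) - f z := by
  -- at the common parent `a` both flows contribute exactly `1` to the sum over its children
  have hparent {y : V} (hy : y ∈ G.aggChildren a) {h : V → ℕ} (hh : G.IsUnitFlow y h) :
      h a = 0 ∧ ∑ w ∈ G.aggChildren a, h w = 1 := by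
    refine ⟨hh.eq_zero_of_not_reach a (hG.not_reach_of_edge (edge_of_mem_aggChildren hy)), ?_⟩
    rw [sum_eq_single_of_mem y hy fun w hw hwy =>
      hh.eq_zero_of_not_reach w (hG.not_reach_of_mem_aggChildren hy hw hwy.symm), hh.apex]
  have hagg {y : V} (hy : y ∈ G.aggChildren a) {h : V → ℕ} (hh : G.IsUnitFlow y h) {z : V}
      (hza : z ≠ a) : EqSumAt h z (G.aggChildren z) :=
    hh.eqSumAt_aggChildren z fun hyz =>
      hza (hG.eq_of_mem_aggChildren hy (edge_of_mem_aggChildren hyz))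
  have hred {y : V} (hy : y ∈ G.aggChildren a) {h : V → ℕ} (hh : G.IsUnitFlow y h) (z : V) :
      EqSumAt h z (G.redParents z) := by
    rcases eq_or_ne z y with rfl | hzy
    · simp [EqSumAt, hG.redParents_eq_empty hy]
    · exact hh.eqSumAt_redParents z hzy
  intro z
  refine ⟨?_, (hred hu hg z).natCast.sub (hred hx hf z).natCast⟩
  rcases eq_or_ne z a with rfl | hza
  · intro _
    simp only [sum_sub_distrib, ← Nat.cast_sum, (hparent hx hf).1, (hparent hx hf).2,
      (hparent hu hg).1, (hparent hu hg).2, sub_self]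
  · exact (hagg hu hg hza).natCast.sub (hagg hx hf hza).natCast

lemma rerouting (hG : G.WellShaped) {a x u : V} (hx : x ∈ G.aggChildren a)
    (hu : u ∈ G.aggChildren a) {f g F : V → ℕ} (hf : G.IsUnitFlow x f)
    (hg : G.IsUnitFlow u g) (hfF : f ≤ F) : G.Rerouting F (F - f + g) := by
  have hroot {y : V} (hy : y ∈ G.aggChildren a) : ¬ G.IsRoot y :=
    fun h => h a (edge_of_mem_aggChildren hy)
  refine ⟨?_, fun z hz => by
    simp [hf.eq_zero_of_isRoot (hroot hx) hz, hg.eq_zero_of_isRoot (hroot hu) hz]⟩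
  convert hf.balanced_sub hG hx hu hg using 1
  funext z
  simp [Nat.cast_sub (hfF z)]
  ring

end IsUnitFlow

namespace WellShaped

open Classical in
/-- Any `cap` gives a unit flow out of `y`; it bounds the flow when it solves the equations
below `y` (`unitFlow_le`). -/
noncomputable def unitFlow (hG : G.WellShaped) (cap : V → ℕ) (y : V) : V → ℕ :=
  hG.wellFounded.fix fun z flow =>
    if z = y then 1
    else if (G.redParents z).Nonempty then
      ∑ p ∈ (G.redParents z).attach, flow p (edge_of_mem_redParents p.2)
    else if h : ∃ p, (p, z) ∈ G.A then
      split (G.aggChildren h.choose) cap (flow h.choose (Or.inr h.choose_spec)) z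
    else 0

section UnitFlow

variable (hG : G.WellShaped) (cap : V → ℕ) (y : V)

open Classical in
lemma unitFlow_eq (z : V) : hG.unitFlow cap y z =
    if z = y then 1
    else if (G.redParents z).Nonempty then ∑ p ∈ G.redParents z, hG.unitFlow cap y p
    else if h : ∃ p, (p, z) ∈ G.A then
      split (G.aggChildren h.choose) cap (hG.unitFlow cap y h.choose) z
    else 0 := by
  rw [unitFlow, WellFounded.fix_eq, ← sum_attach (G.redParents z)]

lemma unitFlow_of_mem_aggChildren {z w : V} (hw : w ∈ G.aggChildren z) (hwy : w ≠ y) :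
    hG.unitFlow cap y w = split (G.aggChildren z) cap (hG.unitFlow cap y z) w := by
  have hp : ∃ p, (p, w) ∈ G.A := ⟨z, mem_aggChildren.1 hw⟩
  rw [unitFlow_eq, if_neg hwy, hG.redParents_eq_empty hw, if_neg Finset.not_nonempty_empty,
    dif_pos hp, hG.eq_of_mem_aggChildren hw (Or.inr hp.choose_spec)]

lemma unitFlow_eq_zero {z : V} (hz : ¬ G.Reach y z) : hG.unitFlow cap y z = 0 := by
  induction z using hG.wellFounded.induction with
  | _ z ih =>
  have hzy : z ≠ y := by rintro rfl; exact hz .refl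
  rw [unitFlow_eq, if_neg hzy]
  split_ifs with hred hagg
  · exact sum_eq_zero fun p hp => ih p (edge_of_mem_redParents hp)
      fun hyp => hz (hyp.tail (edge_of_mem_redParents hp))
  · have hzp := mem_aggChildren.2 hagg.choose_spec
    rw [ih _ (edge_of_mem_aggChildren hzp) fun hyp => hz (hyp.tail (edge_of_mem_aggChildren hzp))]
    exact sum_eq_zero_iff.1 (sum_split ⟨z, hzp⟩ cap 0) z hzp
  · rfl

lemma isUnitFlow_unitFlow : G.IsUnitFlow y (hG.unitFlow cap y) where
  apex := by rw [unitFlow_eq, if_pos rfl]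
  eq_zero_of_not_reach _ := hG.unitFlow_eq_zero cap y
  eqSumAt_aggChildren z hyz hne := by
    rw [sum_congr rfl fun w hw => hG.unitFlow_of_mem_aggChildren cap y hw fun h => hyz (h ▸ hw),
      sum_split hne]
  eqSumAt_redParents z hzy hne := by rw [unitFlow_eq, if_neg hzy, if_pos hne]

end UnitFlow

lemma unitFlow_le (hG : G.WellShaped) {cap : V → ℕ} {y : V} (hcap : G.BalancedBelow cap y)
    (hy : 0 < cap y) : hG.unitFlow cap y ≤ cap := by
  intro z
  induction z using hG.wellFounded.induction with
  | _ z ih =>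
  refine (em (G.Reach y z)).elim (fun hyz => ?_) fun hyz => by
    simp [hG.unitFlow_eq_zero cap y hyz]
  rw [unitFlow_eq]
  split_ifs with hzy hred hagg
  · exact hzy ▸ hy
  · rw [(hcap z hyz).2 hzy hred]
    exact sum_le_sum fun p hp => ih p (edge_of_mem_redParents hp)
  · have hzp := mem_aggChildren.2 hagg.choose_spec
    refine split_le ?_ hzp
    by_cases hyp : G.Reach y hagg.choose
    · rw [← (hcap _ hyp).1 ⟨z, hzp⟩]
      exact ih _ (edge_of_mem_aggChildren hzp)
    · simp [hG.unitFlow_eq_zero cap y hyp]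
  · exact Nat.zero_le _

lemma exists_isUnitFlow_le (hG : G.WellShaped) {cap : V → ℕ} {y : V}
    (hcap : G.BalancedBelow cap y) (hy : 0 < cap y) : ∃ f, G.IsUnitFlow y f ∧ f ≤ cap :=
  ⟨_, hG.isUnitFlow_unitFlow cap y, hG.unitFlow_le hcap hy⟩

lemma exists_rerouting_of_edge (hG : G.WellShaped) {a c : V} (hac : G.Edge a c) {F : V → ℕ}
    (hF : G.BalancedBelow F a) (ha : 0 < F a) : ∃ F', G.Rerouting F F' ∧ 0 < F' c := by
  by_cases hc : 0 < F c
  · exact ⟨F, .refl F, hc⟩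
  rcases hac with hR | hA
  · have hca : c ≠ a := by
      rintro rfl
      exact hG.acyclic c (.single (Or.inl hR))
    have hFc := (hF c (.single (Or.inl hR))).2 hca ⟨a, mem_redParents.2 hR⟩
    have := single_le_sum (f := F) (fun _ _ => Nat.zero_le _) (mem_redParents.2 hR)
    omega
  · have hca := mem_aggChildren.2 hA
    obtain ⟨x, hxa, hx⟩ : ∃ x ∈ G.aggChildren a, 0 < F x :=
      sum_pos_iff.1 ((hF a .refl).1 ⟨c, hca⟩ ▸ ha)
    obtain ⟨f, hf, hfF⟩ :=
      hG.exists_isUnitFlow_le (hF.mono hG (.single (edge_of_mem_aggChildren hxa))) hx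
    have hg := hG.isUnitFlow_unitFlow 0 c
    refine ⟨_, hf.rerouting hG hxa hca hg hfF, ?_⟩
    simp [hg.apex]

lemma exists_rerouting_of_reach (hG : G.WellShaped) {b t : V} (hbt : G.Reach b t) {F : V → ℕ}
    (hF : G.BalancedBelow F b) (hb : 0 < F b) : ∃ F', G.Rerouting F F' ∧ 0 < F' t := by
  induction hbt using ReflTransGen.head_induction_on generalizing F with
  | refl => exact ⟨F, .refl F, hb⟩
  | head hac _ ih =>
    obtain ⟨F₁, hF₁, hc⟩ := hG.exists_rerouting_of_edge hac hF hb
    obtain ⟨F₂, hF₂, ht⟩ := ih ((hF₁.balancedBelow hF).mono hG (.single hac)) hc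
    exact ⟨F₂, hF₁.trans hF₂, ht⟩

end WellShaped

lemma WellDef.balanced {c : V → Option ℕ} (hc : G.WellDef c) (htot : TotalConf c) :
    G.Balanced (cval c) := by
  intro z
  obtain ⟨n, hn⟩ := Option.ne_none_iff_exists'.1 (htot z)
  have hz : cval c z = n := by simp [cval, hn]
  unfold EqSumAt
  rw [hz]
  exact hc.2 z n hn

lemma wellDef_some {s : V → ℕ} (hs : G.Balanced s) : G.WellDef fun z => some (s z) :=
  ⟨by simp, fun z n hn => Option.some_injective _ hn ▸ hs z⟩

end TFG

namespace WellFormed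

variable {G : TFG V} {E : EqSys V} {P1 P2 : Set V}

lemma wellShaped (hwf : WellFormed G E P1 P2) : G.WellShaped :=
  ⟨hwf.T3a, hwf.T3b, hwf.T5⟩

lemma isRoot_of_mem (hwf : WellFormed G E P1 P2) {p : V} (hp : p ∈ P2) : G.IsRoot p :=
  have hk : p ∈ {v | G.kval v = none} := hwf.T1 ▸ Or.inl (Or.inr hp)
  (hwf.T6root p hk).2 hp

lemma nodeConc_of_rerouting [DecidablePred (· ∈ P2)] {N2 : PetriNet ↥P2}
    {m2 : ↥P2 → ℕ} (hwf : WellFormed G E P1 P2) {c : V → Option ℕ} (hcfg : G.IsConfig c)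
    (htot : TotalConf c) (hwd : G.WellDef c) (hreach : N2.reach m2 (restrict c P2))
    {s : V → ℕ} (hs : G.Rerouting (cval c) s) {v w : V} (hv : 0 < s v) (hw : 0 < s w) :
    NodeConc G P2 N2 m2 v w := by
  refine ⟨fun z => some (s z), fun z n hn => ?_, fun z => Option.some_ne_none _,
    TFG.wellDef_some (hs.balanced (hwd.balanced htot)), ?_, hv, hw⟩
  · show some (s z) = some n
    rw [hs.2 z (hwf.T2 z (by simp [hn])), cval, hcfg z n hn]
    rfl
  · convert hreach using 1
    funext p
    exact hs.2 p (hwf.isRoot_of_mem p.2)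

end WellFormed

theorem concurrent_nodes_propagation_general {V : Type} [DecidableEq V] (G : TFG V) (E : EqSys V)
    (P1 P2 : Set V) [DecidablePred (· ∈ P2)]
    (N2 : PetriNet ↥P2) (m2 : ↥P2 → ℕ)
    (hwf : WellFormed G E P1 P2)
    (v w : V) (hvw : NodeConc G P2 N2 m2 v w)
    (hv : v ∉ G.succs w) (hw : w ∉ G.succs v) :
    ∀ v' ∈ G.succs v, ∀ w' ∈ G.succs w, NodeConc G P2 N2 m2 v' w' := by
  intro v' hv' w' hw'
  obtain ⟨c, hcfg, htot, hwd, hreach, hcv, hcw⟩ := hvw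
  have hG := hwf.wellShaped
  have hs := hwd.balanced htot
  obtain ⟨h, hh, hhs⟩ := hG.exists_isUnitFlow_le (hs.balancedBelow v) hcv
  obtain ⟨h', hhh', hv'⟩ :=
    hG.exists_rerouting_of_reach hv' (hh.balancedBelow hG fun _ => rfl) (by simp [hh.apex])
  have hhw : h w = 0 := hh.eq_zero_of_not_reach w hw
  obtain ⟨r, hr, hw'⟩ := hG.exists_rerouting_of_reach hw'
    ((hs.balancedBelow w).tsub hhs (hh.balancedBelow hG fun hwv => absurd hwv hv))
    (by simpa [hhw] using hcw)
  refine hwf.nodeConc_of_rerouting hcfg htot hwd hreach (s := h' + r) ?_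
    (add_pos_of_pos_of_nonneg hv' (Nat.zero_le _)) (add_pos_of_nonneg_of_pos (Nat.zero_le _) hw')
  simpa [add_tsub_cancel_of_le hhs] using hhh'.add hr

theorem concurrent_nodes_propagation {V : Type} [DecidableEq V] (G : TFG V) (E : EqSys V)
    (P1 P2 : Set V) [DecidablePred (· ∈ P1)] [DecidablePred (· ∈ P2)]
    (N1 : PetriNet ↥P1) (m1 : ↥P1 → ℕ) (N2 : PetriNet ↥P2) (m2 : ↥P2 → ℕ)
    (hwf : WellFormed G E P1 P2) (heq : EEquiv E P1 P2 N1 m1 N2 m2)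
    (hsafe1 : N1.Safe m1) (hsafe2 : N2.Safe m2)
    (v w : V) (hvw : NodeConc G P2 N2 m2 v w)
    (hv : v ∉ G.succs w) (hw : w ∉ G.succs v) :
    ∀ v' ∈ G.succs v, ∀ w' ∈ G.succs w, NodeConc G P2 N2 m2 v' w' :=
  concurrent_nodes_propagation_general G E P1 P2 N2 m2 hwf v w hvw hv hw
end

section
/- Let G(E) be a well-formed TFG with node concurrency relation C. If v ∘→ X or X →• v (i.e., the equation v = Σ_{w∈X} w is in E), then node v is dead (v C̄ v) if and only if every node w in X is dead (w C̄ w). -/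
open Finset

variable {V : Type} [DecidableEq V]

lemma TFG.WellDef.cval_eq_sum {G : TFG V} {c : V → Option ℕ} (hwd : G.WellDef c)
    (ht : TotalConf c) {v : V} {X : Finset V}
    (hX : (X = G.aggChildren v ∨ X = G.redParents v) ∧ X.Nonempty) :
    cval c v = ∑ w ∈ X, cval c w := by
  obtain ⟨n, hn⟩ := Option.ne_none_iff_exists'.mp (ht v)
  obtain ⟨hagg, hred⟩ := hwd.2 v n hn
  rw [cval, hn, Option.getD_some]
  rcases hX with ⟨rfl | rfl, hne⟩
  exacts [hagg hne, hred hne]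

lemma nodeConc_self_iff_exists_mem {G : TFG V} {P2 : Set V} [DecidablePred (· ∈ P2)]
    {N2 : PetriNet ↥P2} {m2 : ↥P2 → ℕ} {v : V} {X : Finset V}
    (hX : (X = G.aggChildren v ∨ X = G.redParents v) ∧ X.Nonempty) :
    NodeConc G P2 N2 m2 v v ↔ ∃ w ∈ X, NodeConc G P2 N2 m2 w w := by
  constructor
  · rintro ⟨c, hc, ht, hwd, hreach, hv, -⟩
    rw [hwd.cval_eq_sum ht hX, Finset.sum_pos_iff] at hv
    obtain ⟨w, hw, hw_pos⟩ := hv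
    exact ⟨w, hw, c, hc, ht, hwd, hreach, hw_pos, hw_pos⟩
  · rintro ⟨w, hw, c, hc, ht, hwd, hreach, hw_pos, -⟩
    have hv : 0 < cval c v := by
      rw [hwd.cval_eq_sum ht hX, Finset.sum_pos_iff]
      exact ⟨w, hw, hw_pos⟩
    exact ⟨c, hc, ht, hwd, hreach, hv, hv⟩

theorem dead_node_equation_general {V : Type} [DecidableEq V] (G : TFG V)
    (P2 : Set V) [DecidablePred (· ∈ P2)]
    (N2 : PetriNet ↥P2) (m2 : ↥P2 → ℕ)
    (v : V) (X : Finset V)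
    (hX : (X = G.aggChildren v ∨ X = G.redParents v) ∧ X.Nonempty) :
    (¬ NodeConc G P2 N2 m2 v v) ↔ (∀ w ∈ X, ¬ NodeConc G P2 N2 m2 w w) := by
  rw [nodeConc_self_iff_exists_mem hX]
  simp only [not_exists, not_and]

theorem dead_node_equation {V : Type} [DecidableEq V] (G : TFG V) (E : EqSys V)
    (P1 P2 : Set V) [DecidablePred (· ∈ P1)] [DecidablePred (· ∈ P2)]
    (N1 : PetriNet ↥P1) (m1 : ↥P1 → ℕ) (N2 : PetriNet ↥P2) (m2 : ↥P2 → ℕ)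
    (hwf : WellFormed G E P1 P2) (heq : EEquiv E P1 P2 N1 m1 N2 m2)
    (v : V) (X : Finset V)
    (hX : (X = G.aggChildren v ∨ X = G.redParents v) ∧ X.Nonempty) :
    (¬ NodeConc G P2 N2 m2 v v) ↔ (∀ w ∈ X, ¬ NodeConc G P2 N2 m2 w w) :=
  dead_node_equation_general G P2 N2 m2 v X hX
end

section
/- Let G(E) be a well-formed TFG for (N1,m1) ▷_E (N2,m2) and C the node concurrency relation of G(E). Then for all places p, q of N1: p and q are concurrent in (N1,m1) (some reachable marking of (N1,m1) marks both positively) if and only if p C q. Similarly, for all places p, q of N2: p and q are concurrent in (N2,m2) if and only if p C q. -/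
open Finset

variable {V : Type} [DecidableEq V]

/-!
Total well-defined configurations are, by (T4), exactly the total configurations whose values
solve `E`; any solution of `E` becomes one after overwriting the constant nodes, which by (T1)
occur neither among the places nor in `E`. So by (A1) a reachable marking of either net extends
to a total well-defined configuration, whose restriction to `N2` is reachable by (A3); conversely,
(A3) turns reachability of the `N2`-restriction of such a configuration into reachability of its
`N1`-restriction.
-/

def TFG.solConf (G : TFG V) (s : V → ℕ) : V → Option ℕ :=
  fun v => some ((G.kval v).getD (s v))

namespace TFG

variable {G : TFG V} {s : V → ℕ}

theorem isConfig_solConf : G.IsConfig (G.solConf s) := by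
  intro v n hv
  simp [solConf, hv]

theorem totalConf_solConf : TotalConf (G.solConf s) := by
  simp [TotalConf, solConf]

theorem cval_solConf_of_kval_eq_none {v : V} (hv : G.kval v = none) :
    cval (G.solConf s) v = s v := by
  simp [cval, solConf, hv]

theorem restrict_solConf {P : Set V} (hP : ∀ p ∈ P, G.kval p = none) {m : ↥P → ℕ}
    (hsm : AgreesOn s P m) : restrict (G.solConf s) P = m :=
  funext fun p => (cval_solConf_of_kval_eq_none (hP p p.2)).trans (hsm p)

end TFG

namespace WellFormed

variable {G : TFG V} {E : EqSys V} {P1 P2 : Set V}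

theorem kval_eq_none (hwf : WellFormed G E P1 P2) {v : V} (hv : v ∈ P1 ∪ P2 ∪ fvars E) :
    G.kval v = none :=
  (Set.ext_iff.mp hwf.T1 v).mpr hv

theorem kval_eq_none_of_mem_left (hwf : WellFormed G E P1 P2) :
    ∀ p ∈ P1, G.kval p = none :=
  fun _ hp => hwf.kval_eq_none (Or.inl (Or.inl hp))

theorem kval_eq_none_of_mem_right (hwf : WellFormed G E P1 P2) :
    ∀ p ∈ P2, G.kval p = none :=
  fun _ hp => hwf.kval_eq_none (Or.inl (Or.inr hp))

/-- By (T4) the equations of `E` are exactly the nonempty sum conditions of (CEq). -/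
theorem wellDef_iff_solves (hwf : WellFormed G E P1 P2) {c : V → Option ℕ}
    (htot : TotalConf c) : G.WellDef c ↔ Solves E (cval c) := by
  constructor
  · rintro ⟨-, hsum⟩ ⟨v, X⟩ he
    obtain ⟨hX, hne⟩ := (hwf.T4 v X).mpr he
    obtain ⟨n, hn⟩ := Option.ne_none_iff_exists'.mp (htot v)
    obtain ⟨hagg, hred⟩ := hsum v n hn
    have hcv : cval c v = n := by simp [cval, hn]
    rcases hX with rfl | rfl
    · exact hcv.trans (hagg hne)
    · exact hcv.trans (hred hne)
  · intro hs
    refine ⟨fun v w _ => by simp [htot v, htot w], fun v n hn => ?_⟩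
    have hcv : cval c v = n := by simp [cval, hn]
    exact ⟨fun hne => hcv ▸ hs _ ((hwf.T4 v _).mp ⟨Or.inl rfl, hne⟩),
      fun hne => hcv ▸ hs _ ((hwf.T4 v _).mp ⟨Or.inr rfl, hne⟩)⟩

theorem solves_cval_solConf (hwf : WellFormed G E P1 P2) {s : V → ℕ} (hs : Solves E s) :
    Solves E (cval (G.solConf s)) := by
  intro e he
  have hfv : ∀ v ∈ fvars E, cval (G.solConf s) v = s v := fun v hv =>
    TFG.cval_solConf_of_kval_eq_none (hwf.kval_eq_none (Or.inr hv))
  rw [hfv e.1 ⟨e, he, Or.inl rfl⟩, hs e he]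
  exact Finset.sum_congr rfl fun w hw => (hfv w ⟨e, he, Or.inr hw⟩).symm

theorem wellDef_solConf (hwf : WellFormed G E P1 P2) {s : V → ℕ} (hs : Solves E s) :
    G.WellDef (G.solConf s) :=
  (hwf.wellDef_iff_solves TFG.totalConf_solConf).mpr (hwf.solves_cval_solConf hs)

end WellFormed

namespace EEquiv

variable {G : TFG V} {E : EqSys V} {P1 P2 : Set V}
  {N1 : PetriNet ↥P1} {m1 : ↥P1 → ℕ} {N2 : PetriNet ↥P2} {m2 : ↥P2 → ℕ}

theorem exists_config_of_reach_left (heq : EEquiv E P1 P2 N1 m1 N2 m2)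
    (hwf : WellFormed G E P1 P2) {m : ↥P1 → ℕ} (hm : N1.reach m1 m) :
    ∃ c, G.IsConfig c ∧ TotalConf c ∧ G.WellDef c ∧
      N2.reach m2 (restrict c P2) ∧ restrict c P1 = m := by
  obtain ⟨s, hs, hsm⟩ := heq.A1l m hm
  have hs2 : AgreesOn s P2 (restrict (G.solConf s) P2) := fun p =>
    (TFG.cval_solConf_of_kval_eq_none (hwf.kval_eq_none_of_mem_right p p.2)).symm
  exact ⟨G.solConf s, TFG.isConfig_solConf, TFG.totalConf_solConf, hwf.wellDef_solConf hs,
    (heq.A3 m _ ⟨s, hs, hsm, hs2⟩).mp hm, TFG.restrict_solConf hwf.kval_eq_none_of_mem_left hsm⟩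

theorem exists_config_of_reach_right (heq : EEquiv E P1 P2 N1 m1 N2 m2)
    (hwf : WellFormed G E P1 P2) {m : ↥P2 → ℕ} (hm : N2.reach m2 m) :
    ∃ c, G.IsConfig c ∧ TotalConf c ∧ G.WellDef c ∧ restrict c P2 = m := by
  obtain ⟨s, hs, hsm⟩ := heq.A1r m hm
  exact ⟨G.solConf s, TFG.isConfig_solConf, TFG.totalConf_solConf, hwf.wellDef_solConf hs,
    TFG.restrict_solConf hwf.kval_eq_none_of_mem_right hsm⟩

theorem reach_left_of_reach_right (heq : EEquiv E P1 P2 N1 m1 N2 m2)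
    (hwf : WellFormed G E P1 P2) {c : V → Option ℕ} (htot : TotalConf c) (hwd : G.WellDef c)
    (hreach : N2.reach m2 (restrict c P2)) : N1.reach m1 (restrict c P1) :=
  (heq.A3 _ _ ⟨cval c, (hwf.wellDef_iff_solves htot).mp hwd, fun _ => rfl, fun _ => rfl⟩).mpr
    hreach

end EEquiv

theorem nodeConc_generalizes_concurrency_general {V : Type} [DecidableEq V] (G : TFG V) (E : EqSys V)
    (P1 P2 : Set V) [DecidablePred (· ∈ P2)]
    (N1 : PetriNet ↥P1) (m1 : ↥P1 → ℕ) (N2 : PetriNet ↥P2) (m2 : ↥P2 → ℕ)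
    (hwf : WellFormed G E P1 P2) (heq : EEquiv E P1 P2 N1 m1 N2 m2) :
    (∀ p q : ↥P1, N1.ConcPlaces m1 p q ↔ NodeConc G P2 N2 m2 ↑p ↑q) ∧
    (∀ p q : ↥P2, N2.ConcPlaces m2 p q ↔ NodeConc G P2 N2 m2 ↑p ↑q) := by
  refine ⟨fun p q => ⟨?_, ?_⟩, fun p q => ⟨?_, ?_⟩⟩
  · rintro ⟨m, hm, hp, hq⟩
    obtain ⟨c, hcfg, htot, hwd, hreach, rfl⟩ := heq.exists_config_of_reach_left hwf hm
    exact ⟨c, hcfg, htot, hwd, hreach, hp, hq⟩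
  · rintro ⟨c, -, htot, hwd, hreach, hp, hq⟩
    exact ⟨restrict c P1, heq.reach_left_of_reach_right hwf htot hwd hreach, hp, hq⟩
  · rintro ⟨m, hm, hp, hq⟩
    obtain ⟨c, hcfg, htot, hwd, rfl⟩ := heq.exists_config_of_reach_right hwf hm
    exact ⟨c, hcfg, htot, hwd, hm, hp, hq⟩
  · rintro ⟨c, -, -, -, hreach, hp, hq⟩
    exact ⟨restrict c P2, hreach, hp, hq⟩

theorem nodeConc_generalizes_concurrency {V : Type} [DecidableEq V] (G : TFG V) (E : EqSys V)
    (P1 P2 : Set V) [DecidablePred (· ∈ P1)] [DecidablePred (· ∈ P2)]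
    (N1 : PetriNet ↥P1) (m1 : ↥P1 → ℕ) (N2 : PetriNet ↥P2) (m2 : ↥P2 → ℕ)
    (hwf : WellFormed G E P1 P2) (heq : EEquiv E P1 P2 N1 m1 N2 m2) :
    (∀ p q : ↥P1, N1.ConcPlaces m1 p q ↔ NodeConc G P2 N2 m2 ↑p ↑q) ∧
    (∀ p q : ↥P2, N2.ConcPlaces m2 p q ↔ NodeConc G P2 N2 m2 ↑p ↑q) :=
  nodeConc_generalizes_concurrency_general G E P1 P2 N1 m1 N2 m2 hwf heq
end
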